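/- arXiv:1510.08031 — 2 statements merged into one kernel-verified Lean document; each statement's English description precedes it below -/
import Mathlib

section
/- In the ring QH = ℤ[H,E]/(H² = kE + R, E² = Q), the characteristic polynomial of multiplication by vE (where v is the number of vertices) on the basis {1, H, E, HE} is (λ²-9)² for the triangle case (v=3, k=1, R=0, Q=1), λ(λ³-128) for the tetrahedron case (v=4, k=2, R=0, Q=H), and (λ² - 6λ - 36)² for the octahedron case (v=6, k=5, R=3, Q=E+1). -/
open Polynomial Matrix

/-- The matrix of multiplication by `E` on the free `ℤ`-module with basis `1, H, E, HE` in
the ring `ℤ[H,E]/(H² = kE + r₀ + r₁H, E² = q₀ + q₁H + q₂E)`.  The columns record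
`E·1 = E`, `E·H = HE`, `E·E = q₀ + q₁H + q₂E`, and
`E·HE = q₁r₀ + (q₀ + q₁r₁)H + q₁kE + q₂HE`. -/
def multE (k r₀ r₁ q₀ q₁ q₂ : ℤ) : Matrix (Fin 4) (Fin 4) ℤ :=
  !![0, 0, q₀, q₁ * r₀;
     0, 0, q₁, q₀ + q₁ * r₁;
     1, 0, q₂, q₁ * k;
     0, 1, 0,  q₂]

theorem det_fin_four_of {R : Type*} [CommRing R] (a b c d e f g h i j k l m n o p : R) :
    !![a, b, c, d; e, f, g, h; i, j, k, l; m, n, o, p].det =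
      a * (f * (k * p - l * o) - g * (j * p - l * n) + h * (j * o - k * n)) -
      b * (e * (k * p - l * o) - g * (i * p - l * m) + h * (i * o - k * m)) +
      c * (e * (j * p - l * n) - f * (i * p - l * m) + h * (i * n - j * m)) -
      d * (e * (j * o - k * n) - f * (i * o - k * m) + g * (i * n - j * m)) := by
  rw [det_succ_row_zero, Fin.sum_univ_four]
  simp only [det_fin_three, submatrix_apply, Fin.succAbove, Fin.reduceSucc, Fin.reduceCastSucc,
    Fin.reduceLT, Fin.coe_ofNat_eq_mod, reduceIte, of_apply, cons_val, Fin.isValue]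
  ring

theorem charmatrix_smul_multE (v k r₀ r₁ q₀ q₁ q₂ : ℤ) :
    charmatrix (v • multE k r₀ r₁ q₀ q₁ q₂) =
      !![X, 0, -C (v * q₀), -C (v * (q₁ * r₀));
         0, X, -C (v * q₁), -C (v * (q₀ + q₁ * r₁));
         -C v, 0, X - C (v * q₂), -C (v * (q₁ * k));
         0, -C v, 0, X - C (v * q₂)] := by
  ext i j
  fin_cases i <;> fin_cases j <;> simp [multE]

theorem charpoly_smul_multE (v k r₀ r₁ q₀ q₁ q₂ : ℤ) :
    (v • multE k r₀ r₁ q₀ q₁ q₂).charpoly =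
      X ^ 4 - C (2 * v * q₂) * X ^ 3 + C (v ^ 2 * (q₂ ^ 2 - 2 * q₀ - q₁ * r₁)) * X ^ 2
        - C (v ^ 3 * (q₁ ^ 2 * k - 2 * q₀ * q₂ - q₁ * q₂ * r₁)) * X
        + C (v ^ 4 * (q₀ ^ 2 + q₀ * q₁ * r₁ - q₁ ^ 2 * r₀)) := by
  rw [charpoly, charmatrix_smul_multE, det_fin_four_of]
  simp only [map_mul, map_add, map_sub, map_pow, map_ofNat]
  ring

/-- In `QH = ℤ[H,E]/(H² = kE + R, E² = Q)`, the characteristic polynomial of quantum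
multiplication by `vE` on the basis `{1, H, E, HE}` is `(λ²-9)²` for the triangle
(`v=3, k=1, R=0, Q=1`), `λ(λ³-128)` for the tetrahedron (`v=4, k=2, R=0, Q=H`), and
`(λ²-6λ-36)²` for the octahedron (`v=6, k=5, R=3, Q=E+1`). -/
theorem stmt7 :
    ((3 : ℤ) • multE 1 0 0 1 0 0).charpoly = (X ^ 2 - 9) ^ 2 ∧
    ((4 : ℤ) • multE 2 0 0 0 1 0).charpoly = X * (X ^ 3 - 128) ∧
    ((6 : ℤ) • multE 5 3 0 1 0 1).charpoly = (X ^ 2 - 6 * X - 36) ^ 2 := by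
  simp only [charpoly_smul_multE]
  refine ⟨?_, ?_, ?_⟩ <;> norm_num <;> ring
end

section
/- The polynomial h₂(z) = 320z¹⁶ - 224128z¹⁵ - 1467885z¹⁴ + 5601117772z¹³ + 42700276243z¹² - 623885336112z¹¹ + 2513717360270z¹⁰ - 5265619809592z⁹ + 6655153864734z⁸ - 5265619809592z⁷ + 2513717360270z⁶ - 623885336112z⁵ + 42700276243z⁴ + 5601117772z³ - 1467885z² - 224128z + 320 factors over ℤ as (8 - 11z + 8z²)(1 - 671z + 2301z² - 671z³ + z⁴)(1 - 185z + 357z² - 185z³ + z⁴)(40 + 6279z + 81132z² - 178264z³ + 81132z⁴ + 6279z⁵ + 40z⁶), and every complex root of h₂ is either real or of unit modulus. -/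
open Polynomial

/-- The polynomial `h₂` arising in the analysis of index-4 discs on the icosahedral
Lagrangian. -/
noncomputable def h2 : Polynomial ℤ :=
  320 * X ^ 16 - 224128 * X ^ 15 - 1467885 * X ^ 14 + 5601117772 * X ^ 13
    + 42700276243 * X ^ 12 - 623885336112 * X ^ 11 + 2513717360270 * X ^ 10
    - 5265619809592 * X ^ 9 + 6655153864734 * X ^ 8 - 5265619809592 * X ^ 7
    + 2513717360270 * X ^ 6 - 623885336112 * X ^ 5 + 42700276243 * X ^ 4
    + 5601117772 * X ^ 3 - 1467885 * X ^ 2 - 224128 * X + 320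

/-!
`h₂` is palindromic of degree 16, so for `z ≠ 0` we have `h₂(z) = z⁸ q(z + z⁻¹)` with `q` of
degree 8, the product of the four factors reduced in the same way. Each reduced factor changes
sign on `ℝ` as often as its degree, so `q` splits over `ℝ`, and every root `z` of `h₂` has
`z + z⁻¹` real. Since `Im (z + z⁻¹) = Im z · (1 - |z|⁻²)`, `z` is real or of modulus one.
-/

theorem Complex.im_eq_zero_or_norm_eq_one_of_im_add_inv_eq_zero {z : ℂ} (h : (z + z⁻¹).im = 0) :
    z.im = 0 ∨ ‖z‖ = 1 := by
  rcases eq_or_ne z 0 with rfl | hz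
  · simp
  have hn : normSq z ≠ 0 := normSq_eq_zero.not.mpr hz
  rw [add_im, inv_im] at h
  have hfactor : z.im * (normSq z - 1) = 0 := by
    field_simp at h
    linear_combination h
  refine (mul_eq_zero.mp hfactor).imp id fun h1 => ?_
  rw [← pow_eq_one_iff_of_nonneg (norm_nonneg z) two_ne_zero, Complex.sq_norm]
  linear_combination h1

theorem Polynomial.exists_isRoot_mem_Ioo_of_eval_mul_eval_neg {p : ℝ[X]} {a b : ℝ} (hab : a < b)
    (h : p.eval a * p.eval b < 0) : ∃ r ∈ Set.Ioo a b, p.IsRoot r := by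
  have hcont : ContinuousOn (fun x => p.eval x) (Set.Icc a b) := p.continuousOn
  rcases mul_neg_iff.mp h with ⟨ha, hb⟩ | ⟨ha, hb⟩
  · exact intermediate_value_Ioo' hab.le hcont ⟨hb, ha⟩
  · exact intermediate_value_Ioo hab.le hcont ⟨ha, hb⟩

theorem Polynomial.splits_of_eval_mul_eval_neg {p : ℝ[X]} {n : ℕ} (x : Fin (n + 1) → ℝ)
    (hx : StrictMono x) (hsign : ∀ i : Fin n, p.eval (x i.castSucc) * p.eval (x i.succ) < 0)
    (hdeg : p.natDegree ≤ n) : p.Splits := by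
  rcases eq_or_ne p 0 with rfl | hp
  · exact Splits.zero
  choose r hr hroot using fun i : Fin n =>
    exists_isRoot_mem_Ioo_of_eval_mul_eval_neg (hx i.castSucc_lt_succ) (hsign i)
  have hr_mono : StrictMono r := fun i j hij =>
    (hr i).2.trans <| (hx.monotone (Fin.succ_le_castSucc_iff.mpr hij)).trans_lt (hr j).1
  have hsub : (Finset.univ.image r).val ⊆ p.roots := fun y hy => by
    obtain ⟨i, -, rfl⟩ := Finset.mem_image.mp (Finset.mem_val.mp hy)
    exact (mem_roots hp).mpr (hroot i)
  rw [splits_iff_card_roots]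
  refine le_antisymm (card_roots' p) (hdeg.trans ?_)
  calc n = (Finset.univ.image r).card := by
        rw [Finset.card_image_of_injective _ hr_mono.injective, Finset.card_fin]
    _ ≤ p.roots.card := Multiset.card_le_card (Finset.val_le_iff_val_subset.mpr hsub)

theorem Polynomial.Splits.im_eq_zero_of_aeval_eq_zero {q : ℝ[X]} (hq : q.Splits) (hq0 : q ≠ 0)
    {z : ℂ} (hz : aeval z q = 0) : z.im = 0 := by
  obtain ⟨r, rfl⟩ := hq.mem_range_of_isRoot hq0 (i := Complex.ofRealHom)
    (by rw [IsRoot, ← eval₂_eq_eval_map]; exact hz)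
  exact Complex.ofReal_im r

noncomputable def reducedH2 : ℝ[X] :=
  (8 * X - 11) * (X ^ 2 - 671 * X + 2299) * (X ^ 2 - 185 * X + 355)
    * (40 * X ^ 3 + 6279 * X ^ 2 + 81012 * X - 190822)

theorem aeval_h2_eq {z : ℂ} (hz : z ≠ 0) : aeval z h2 = z ^ 8 * aeval (z + z⁻¹) reducedH2 := by
  simp only [h2, reducedH2, map_mul, map_add, map_sub, map_pow, aeval_X, map_ofNat]
  field_simp
  ring

theorem reducedH2_ne_zero : reducedH2 ≠ 0 := fun h => by
  have := congrArg (eval 0) h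
  norm_num [reducedH2] at this

theorem splits_reducedH2 : reducedH2.Splits := by
  refine .mul (.mul (.mul ?_ ?_) ?_) ?_
  · exact splits_of_eval_mul_eval_neg ![0, 2] (by simp [Fin.strictMono_iff_lt_succ])
      (by simp [Fin.forall_fin_succ]; norm_num) (by compute_degree)
  · exact splits_of_eval_mul_eval_neg ![0, 10, 700]
      (by simp [Fin.strictMono_iff_lt_succ, Fin.forall_fin_succ]; norm_num)
      (by simp [Fin.forall_fin_succ]; norm_num) (by compute_degree)
  · exact splits_of_eval_mul_eval_neg ![0, 10, 200]
      (by simp [Fin.strictMono_iff_lt_succ, Fin.forall_fin_succ]; norm_num)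
      (by simp [Fin.forall_fin_succ]; norm_num) (by compute_degree)
  · exact splits_of_eval_mul_eval_neg ![-150, -140, 0, 3]
      (by simp [Fin.strictMono_iff_lt_succ, Fin.forall_fin_succ]; norm_num)
      (by simp [Fin.forall_fin_succ]; norm_num) (by compute_degree)

/-- `h₂` factors over `ℤ` as the displayed product, and every complex root of `h₂` is either
real or of unit modulus. -/
theorem stmt16 :
    h2 = (8 - 11 * X + 8 * X ^ 2)
          * (1 - 671 * X + 2301 * X ^ 2 - 671 * X ^ 3 + X ^ 4)
          * (1 - 185 * X + 357 * X ^ 2 - 185 * X ^ 3 + X ^ 4)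
          * (40 + 6279 * X + 81132 * X ^ 2 - 178264 * X ^ 3 + 81132 * X ^ 4
              + 6279 * X ^ 5 + 40 * X ^ 6) ∧
    ∀ z : ℂ, Polynomial.aeval z h2 = 0 → z.im = 0 ∨ ‖z‖ = 1 := by
  refine ⟨by rw [h2]; ring, fun z hz => ?_⟩
  have hz0 : z ≠ 0 := by
    rintro rfl
    simp [h2, map_ofNat] at hz
  rw [aeval_h2_eq hz0, mul_eq_zero, or_iff_right (pow_ne_zero _ hz0)] at hz
  exact Complex.im_eq_zero_or_norm_eq_one_of_im_add_inv_eq_zero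
    (splits_reducedH2.im_eq_zero_of_aeval_eq_zero reducedH2_ne_zero hz)
end
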